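/- arXiv:2303.11769 — 2 statements merged into one kernel-verified Lean document; each statement's English description precedes it below -/
import Mathlib

section
/- Let f : X → Y be a surjective homomorphism of Słomiński algebras and let K ⊆ X be the kernel of some homomorphism g : X → Z of Słomiński algebras. Then the direct image f(K) is itself the kernel of some homomorphism of Słomiński algebras with domain Y; that is, there exist a Słomiński algebra W and a homomorphism h : Y → W with Ker h = f(K). -/
universe u

/-- A Słomiński algebra: a set with a constant `zero` and binary operations `p`, `d`
satisfying `d x x = 0` and `p (d x y) y = x`. -/
structure Slominski (X : Type u) where
  zero : X
  p : X → X → X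
  d : X → X → X
  d_self : ∀ x, d x x = zero
  p_d : ∀ x y, p (d x y) y = x

/-- A homomorphism of Słomiński algebras: a map preserving `zero`, `p` and `d`. -/
def Slominski.IsHom {X Y : Type u} (SX : Slominski X) (SY : Slominski Y) (f : X → Y) : Prop :=
  f SX.zero = SY.zero ∧
    (∀ a b, f (SX.p a b) = SY.p (f a) (f b)) ∧
    (∀ a b, f (SX.d a b) = SY.d (f a) (f b))

/-- The kernel of a homomorphism of Słomiński algebras. -/
def Slominski.ker {X Y : Type u} (SY : Slominski Y) (f : X → Y) : Set X :=
  {x | f x = SY.zero}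

theorem Slominski.p_zero {A : Type u} (S : Slominski A) (a : A) : S.p S.zero a = a := by
  have h := S.p_d a a
  rwa [S.d_self] at h

theorem slominski_image_of_kernel_is_kernel {X Y Z : Type u}
    (SX : Slominski X) (SY : Slominski Y) (SZ : Slominski Z)
    (f : X → Y) (hf : SX.IsHom SY f) (hfsurj : Function.Surjective f)
    (g : X → Z) (hg : SX.IsHom SZ g) (K : Set X) (hK : K = SZ.ker g) :
    ∃ (W : Type u) (SW : Slominski W) (h : Y → W),
      SY.IsHom SW h ∧ SW.ker h = f '' K := by
  classical
  obtain ⟨hf0, hfp, hfd⟩ := hf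
  obtain ⟨hg0, hgp, hgd⟩ := hg
  -- the pushforward of the kernel-pair congruence of `g` along `f`
  let r : Y → Y → Prop := fun y y' => ∃ x x', f x = y ∧ f x' = y' ∧ g x = g x'
  have hrefl : ∀ y, r y y := by
    intro y
    obtain ⟨x, hx⟩ := hfsurj y
    exact ⟨x, x, hx, hx, rfl⟩
  have hsymm : ∀ {a b : Y}, r a b → r b a := by
    rintro a b ⟨x, x', h1, h2, h3⟩
    exact ⟨x', x, h2, h1, h3.symm⟩
  have htrans : ∀ {a b c : Y}, r a b → r b c → r a c := by
    rintro a b c ⟨x1, x1', h1, h1', hg1⟩ ⟨x2, x2', h2, h2', hg2⟩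
    refine ⟨SX.p (SX.d x1 x1') x2, x2', ?_, h2', ?_⟩
    · rw [hfp, hfd, h1, h1', h2, SY.p_d]
    · rw [hgp, hgd, hg1, SZ.d_self, SZ.p_zero, hg2]
  let s : Setoid Y := ⟨r, hrefl, @hsymm, @htrans⟩
  have hpc : ∀ (a b a' b' : Y), r a a' → r b b' → r (SY.p a b) (SY.p a' b') := by
    rintro a b a' b' ⟨x1, x1', h1, h1', hg1⟩ ⟨x2, x2', h2, h2', hg2⟩
    exact ⟨SX.p x1 x2, SX.p x1' x2',
      by rw [hfp, h1, h2], by rw [hfp, h1', h2'], by rw [hgp, hgp, hg1, hg2]⟩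
  have hdc : ∀ (a b a' b' : Y), r a a' → r b b' → r (SY.d a b) (SY.d a' b') := by
    rintro a b a' b' ⟨x1, x1', h1, h1', hg1⟩ ⟨x2, x2', h2, h2', hg2⟩
    exact ⟨SX.d x1 x2, SX.d x1' x2',
      by rw [hfd, h1, h2], by rw [hfd, h1', h2'], by rw [hgd, hgd, hg1, hg2]⟩
  let SW : Slominski (Quotient s) :=
    { zero := Quotient.mk s SY.zero
      p := Quotient.lift₂ (fun a b => Quotient.mk s (SY.p a b))
        (fun a b a' b' ha hb => Quotient.sound (hpc a b a' b' ha hb))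
      d := Quotient.lift₂ (fun a b => Quotient.mk s (SY.d a b))
        (fun a b a' b' ha hb => Quotient.sound (hdc a b a' b' ha hb))
      d_self := by
        refine Quotient.ind (fun y => ?_)
        exact congrArg (Quotient.mk s) (SY.d_self y)
      p_d := by
        refine Quotient.ind₂ (fun y y' => ?_)
        exact congrArg (Quotient.mk s) (SY.p_d y y') }
  refine ⟨Quotient s, SW, Quotient.mk s, ⟨rfl, fun a b => rfl, fun a b => rfl⟩, ?_⟩
  ext y
  constructor
  · intro hy
    have hy' : r y SY.zero := Quotient.exact hy
    obtain ⟨x, x', h1, h2, h3⟩ := hy'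
    refine ⟨SX.p (SX.d x x') SX.zero, ?_, ?_⟩
    · rw [hK]
      show g (SX.p (SX.d x x') SX.zero) = SZ.zero
      rw [hgp, hgd, h3, SZ.d_self, hg0, SZ.p_zero]
    · rw [hfp, hfd, h1, h2, hf0, SY.p_d]
  · rintro ⟨x, hxK, rfl⟩
    rw [hK] at hxK
    have hgx : g x = SZ.zero := hxK
    have : r (f x) SY.zero := ⟨x, SX.zero, rfl, hf0, by rw [hgx, hg0]⟩
    exact Quotient.sound this
end

section
/- (Projection-diamond chase for Słomiński algebras.) Let n : G → X and r : G → Y be surjective homomorphisms of Słomiński algebras, and let x : X → Z and y : Y → Z be homomorphisms such that x ∘ n = y ∘ r and such that Ker(x ∘ n) = Ker n ∨ Ker r (the join of subalgebras of G). Then for all a ∈ X and b ∈ Y with x(a) = y(b), there exists c ∈ G with n(c) = a and r(c) = b. -/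
universe u

/-- A subalgebra of a Słomiński algebra: a subset containing `zero` and closed under
`p` and `d`. -/
def Slominski.IsSubalgebra {X : Type u} (SX : Slominski X) (S : Set X) : Prop :=
  SX.zero ∈ S ∧
    (∀ a b, a ∈ S → b ∈ S → SX.p a b ∈ S) ∧
    (∀ a b, a ∈ S → b ∈ S → SX.d a b ∈ S)

/-- The join of two subsets: the smallest subalgebra containing their union,
realized as the intersection of all subalgebras containing the union. -/
def Slominski.join {X : Type u} (SX : Slominski X) (A B : Set X) : Set X :=
  ⋂₀ {T | SX.IsSubalgebra T ∧ A ∪ B ⊆ T}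

theorem slominski_projection_diamond_chase {G X Y Z : Type u}
    (SG : Slominski G) (SX : Slominski X) (SY : Slominski Y) (SZ : Slominski Z)
    (n : G → X) (hn : SG.IsHom SX n) (hnsurj : Function.Surjective n)
    (r : G → Y) (hr : SG.IsHom SY r) (hrsurj : Function.Surjective r)
    (x : X → Z) (hx : SX.IsHom SZ x)
    (y : Y → Z) (hy : SY.IsHom SZ y)
    (hcomm : ∀ c : G, x (n c) = y (r c))
    (hker : SZ.ker (fun c : G => x (n c)) = SG.join (SX.ker n) (SY.ker r)) :
    ∀ (a : X) (b : Y), x a = y b → ∃ c : G, n c = a ∧ r c = b := by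
  obtain ⟨hn0, hnp, hnd⟩ := hn
  obtain ⟨hr0, hrp, hrd⟩ := hr
  obtain ⟨hx0, hxp, hxd⟩ := hx
  obtain ⟨hy0, hyp, hyd⟩ := hy
  -- p zero b = b in any Słomiński algebra
  have pzero : ∀ {W : Type u} (SW : Slominski W) (b : W), SW.p SW.zero b = b := by
    intro W SW b
    have := SW.p_d b b
    rwa [SW.d_self b] at this
  intro a b hab
  obtain ⟨g, hg⟩ := hnsurj a
  obtain ⟨h, hh⟩ := hrsurj b
  set t := SG.d g h with ht
  have htker : t ∈ SZ.ker (fun c : G => x (n c)) := by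
    show x (n t) = SZ.zero
    rw [ht, hnd, hxd, hg, hcomm h, hh, hab, SZ.d_self]
  rw [hker] at htker
  -- S = set of t admitting u with n u = n t and r u = zero
  set S : Set G := {t : G | ∃ u, n u = n t ∧ r u = SY.zero} with hS
  have hSsub : SG.IsSubalgebra S := by
    refine ⟨⟨SG.zero, rfl, hr0⟩, ?_, ?_⟩
    · rintro a b ⟨u, hu1, hu2⟩ ⟨v, hv1, hv2⟩
      refine ⟨SG.p u v, ?_, ?_⟩
      · rw [hnp, hnp, hu1, hv1]
      · rw [hrp, hu2, hv2, pzero]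
    · rintro a b ⟨u, hu1, hu2⟩ ⟨v, hv1, hv2⟩
      refine ⟨SG.d u v, ?_, ?_⟩
      · rw [hnd, hnd, hu1, hv1]
      · rw [hrd, hu2, hv2, SY.d_self]
  have hSmem : t ∈ S := by
    apply htker S
    refine ⟨hSsub, ?_⟩
    rintro w (hw | hw)
    · exact ⟨SG.zero, by rw [hn0, hw], hr0⟩
    · exact ⟨w, rfl, hw⟩
  obtain ⟨u, hu1, hu2⟩ := hSmem
  refine ⟨SG.p u h, ?_, ?_⟩
  · rw [hnp, hu1, ht, hnd, hg, SX.p_d]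
  · rw [hrp, hu2, pzero, hh]
end
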